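/- arXiv:1002.3503 — 7 statements merged into one kernel-verified Lean document; each statement's English description precedes it below -/
import Mathlib

section
/- Let L be a finite lattice with minimum element 0 and maximum element 1, let μ denote its Möbius function and ζ the characteristic function of the relation ≤. Let x ∈ L and let x^⊥ denote the set of complements of x in L. Then μ(0,1) = Σ_{y,z ∈ x^⊥} μ(0,y) ζ(y,z) μ(z,1). -/
open Finset

/-- The Möbius function of a finite partial order, as an integer-valued
function on pairs of elements. -/
noncomputable def latticeMu (L : Type*) [PartialOrder L] [Fintype L] (a b : L) : ℤ :=
  letI : DecidableEq L := Classical.decEq _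
  letI : @DecidableRel L L (· < ·) := Classical.decRel _
  letI : @DecidableRel L L (· ≤ ·) := Classical.decRel _
  letI := Fintype.toLocallyFiniteOrder (α := L)
  IncidenceAlgebra.mu ℤ a b

/-- The zeta function of a partial order: the characteristic function of `≤`. -/
noncomputable def latticeZeta (L : Type*) [PartialOrder L] (a b : L) : ℤ :=
  letI : @DecidableRel L L (· ≤ ·) := Classical.decRel _
  IncidenceAlgebra.zeta ℤ a b

/-!
By Weisner's theorem `∑_{w ⊔ y = ⊤} μ(⊥, y) = [w = ⊥] μ(⊥, ⊤)`,
`μ(⊥, ⊤) = ∑_{w ≤ x} μ(⊥, w) ∑_{w ⊔ y = ⊤} μ(⊥, y) = ∑_y μ(⊥, y) ∑_{w ≤ x, w ⊔ y = ⊤} μ(⊥, w)`.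
The inner sum vanishes unless `x ⊔ y = ⊤`; otherwise, reading it backwards through the expansion
`[x ⊓ z = ⊥] = ∑_{w ≤ x ⊓ z} μ(⊥, w)`, it equals `∑_{z ≥ y, x ⊓ z = ⊥} μ(z, ⊤)`.
Finally, for `y ≤ z` the conditions `x ⊔ y = ⊤` and `x ⊓ z = ⊥` say exactly that `y` and `z` are
both complements of `x`. Indicators are written as sums of products of `μ` and `ζ` throughout, so
every rearrangement is an exchange of finite sums followed by `μ ζ = ζ μ = 1`.
-/

section PartialOrder

open scoped Classical

variable {L : Type*} [PartialOrder L]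

lemma latticeZeta_apply (a b : L) : latticeZeta L a b = if a ≤ b then 1 else 0 := rfl

variable [Fintype L]

lemma latticeMu_self (a : L) : latticeMu L a a = 1 := by
  let := Fintype.toLocallyFiniteOrder (α := L)
  exact IncidenceAlgebra.mu_self ..

lemma sum_latticeMu_mul_latticeZeta (a b : L) :
    ∑ y, latticeMu L a y * latticeZeta L y b = if a = b then 1 else 0 := by
  let := Fintype.toLocallyFiniteOrder (α := L)
  rw [← IncidenceAlgebra.sum_Icc_mu_right, ← sum_subset (subset_univ (Icc a b))]
  · refine sum_congr rfl fun y hy => ?_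
    rw [latticeZeta_apply, if_pos (mem_Icc.1 hy).2, mul_one]
    rfl
  · intro y _ hy
    rw [mem_Icc, not_and_or] at hy
    rcases hy with hay | hyb
    · rw [show latticeMu L a y = 0 from IncidenceAlgebra.apply_eq_zero_of_not_le hay _, zero_mul]
    · rw [latticeZeta_apply, if_neg hyb, mul_zero]

lemma sum_latticeZeta_mul_latticeMu (a b : L) :
    ∑ y, latticeZeta L a y * latticeMu L y b = if a = b then 1 else 0 := by
  let := Fintype.toLocallyFiniteOrder (α := L)
  rw [← IncidenceAlgebra.sum_Icc_mu_left, ← sum_subset (subset_univ (Icc a b))]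
  · refine sum_congr rfl fun y hy => ?_
    rw [latticeZeta_apply, if_pos (mem_Icc.1 hy).1, one_mul]
    rfl
  · intro y _ hy
    rw [mem_Icc, not_and_or] at hy
    rcases hy with hay | hyb
    · rw [latticeZeta_apply, if_neg hay, zero_mul]
    · rw [show latticeMu L y b = 0 from IncidenceAlgebra.apply_eq_zero_of_not_le hyb _, mul_zero]

end PartialOrder

section Lattice

open scoped Classical

variable {L : Type*} [Lattice L]

lemma latticeZeta_sup (a b c : L) :
    latticeZeta L (a ⊔ b) c = latticeZeta L a c * latticeZeta L b c := by
  simp only [latticeZeta_apply, sup_le_iff, ite_and, ite_mul, one_mul, zero_mul]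

lemma latticeZeta_inf (a b c : L) :
    latticeZeta L a (b ⊓ c) = latticeZeta L a b * latticeZeta L a c := by
  simp only [latticeZeta_apply, le_inf_iff, ite_and, ite_mul, one_mul, zero_mul]

variable [BoundedOrder L]

lemma ite_complements_latticeZeta (x y z : L) :
    (if (x ⊓ y = ⊥ ∧ x ⊔ y = ⊤) ∧ (x ⊓ z = ⊥ ∧ x ⊔ z = ⊤) then latticeZeta L y z else 0) =
      (if x ⊔ y = ⊤ then 1 else 0) * (if x ⊓ z = ⊥ then 1 else 0) * latticeZeta L y z := by
  by_cases hyz : y ≤ z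
  · have hinf := inf_le_inf_left x hyz
    have hsup := sup_le_sup_left hyz x
    split_ifs <;> simp_all [latticeZeta_apply]
  · simp [latticeZeta_apply, hyz]

variable [Fintype L]

lemma sum_latticeZeta_mul_latticeZeta_mul_latticeMu_top (a b : L) :
    ∑ c, latticeZeta L a c * latticeZeta L b c * latticeMu L c ⊤ =
      if a ⊔ b = ⊤ then 1 else 0 := by
  simp_rw [← latticeZeta_sup, sum_latticeZeta_mul_latticeMu]

lemma sum_latticeMu_bot_mul_latticeZeta_mul_latticeZeta (a b : L) :
    ∑ w, latticeMu L ⊥ w * latticeZeta L w a * latticeZeta L w b =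
      if a ⊓ b = ⊥ then 1 else 0 := by
  simp_rw [mul_assoc, ← latticeZeta_inf, sum_latticeMu_mul_latticeZeta, eq_comm]

theorem sum_latticeMu_bot_mul_ite_sup_eq_top (w : L) :
    ∑ y, latticeMu L ⊥ y * (if w ⊔ y = ⊤ then 1 else 0) =
      if w = ⊥ then latticeMu L ⊥ ⊤ else 0 := by
  calc ∑ y, latticeMu L ⊥ y * (if w ⊔ y = ⊤ then 1 else 0)
      = ∑ c, latticeZeta L w c * latticeMu L c ⊤ *
          ∑ y, latticeMu L ⊥ y * latticeZeta L y c := by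
        simp_rw [← sum_latticeZeta_mul_latticeZeta_mul_latticeMu_top, mul_sum]
        rw [sum_comm]
        exact sum_congr rfl fun _ _ => sum_congr rfl fun _ _ => by ring
    _ = if w = ⊥ then latticeMu L ⊥ ⊤ else 0 := by
        simp only [sum_latticeMu_mul_latticeZeta]
        simp [latticeZeta_apply]

lemma ite_sup_eq_top_mul_sum_ite_inf_eq_bot (x y : L) :
    (if x ⊔ y = ⊤ then 1 else 0) *
        ∑ z, (if x ⊓ z = ⊥ then 1 else 0) * latticeZeta L y z * latticeMu L z ⊤ =
      ∑ w, latticeMu L ⊥ w * latticeZeta L w x * (if w ⊔ y = ⊤ then 1 else 0) := by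
  have expand : ∑ z, (if x ⊓ z = ⊥ then 1 else 0) * latticeZeta L y z * latticeMu L z ⊤ =
      ∑ w, latticeMu L ⊥ w * latticeZeta L w x * (if w ⊔ y = ⊤ then 1 else 0) := by
    simp_rw [← sum_latticeMu_bot_mul_latticeZeta_mul_latticeZeta,
      ← sum_latticeZeta_mul_latticeZeta_mul_latticeMu_top, mul_sum, sum_mul]
    rw [sum_comm]
    exact sum_congr rfl fun _ _ => sum_congr rfl fun _ _ => by ring
  rw [expand]
  by_cases hxy : x ⊔ y = ⊤
  · rw [if_pos hxy, one_mul]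
  · rw [if_neg hxy, zero_mul, eq_comm]
    refine sum_eq_zero fun w _ => ?_
    by_cases hwx : w ≤ x
    · have hwy : w ⊔ y ≠ ⊤ := fun h => hxy (top_le_iff.1 (h ▸ sup_le_sup_right hwx y))
      rw [if_neg hwy, mul_zero]
    · rw [latticeZeta_apply, if_neg hwx, mul_zero, zero_mul]

end Lattice

open scoped Classical in
/-- Crapo's Complement Theorem. -/
theorem crapo_complement_theorem {L : Type*} [Lattice L] [BoundedOrder L] [Fintype L]
    (x : L) :
    latticeMu L ⊥ ⊤ =
      ∑ y ∈ Finset.univ.filter (fun y : L => x ⊓ y = ⊥ ∧ x ⊔ y = ⊤),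
        ∑ z ∈ Finset.univ.filter (fun z : L => x ⊓ z = ⊥ ∧ x ⊔ z = ⊤),
          latticeMu L ⊥ y * latticeZeta L y z * latticeMu L z ⊤ := by
  calc latticeMu L ⊥ ⊤
      = ∑ w, latticeMu L ⊥ w * latticeZeta L w x * (if w = ⊥ then latticeMu L ⊥ ⊤ else 0) := by
        simp [latticeMu_self, latticeZeta_apply]
    _ = ∑ y, latticeMu L ⊥ y *
          ∑ w, latticeMu L ⊥ w * latticeZeta L w x * (if w ⊔ y = ⊤ then 1 else 0) := by
        simp_rw [← sum_latticeMu_bot_mul_ite_sup_eq_top, mul_sum]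
        rw [sum_comm]
        exact sum_congr rfl fun _ _ => sum_congr rfl fun _ _ => by ring
    _ = ∑ y, ∑ z, latticeMu L ⊥ y * ((if x ⊔ y = ⊤ then 1 else 0) *
          (if x ⊓ z = ⊥ then 1 else 0) * latticeZeta L y z) * latticeMu L z ⊤ := by
        simp_rw [← ite_sup_eq_top_mul_sum_ite_inf_eq_bot, mul_sum]
        exact sum_congr rfl fun _ _ => sum_congr rfl fun _ _ => by ring
    _ = _ := by
        simp_rw [← ite_complements_latticeZeta, sum_filter, mul_ite, ite_mul, mul_zero, zero_mul]
        refine sum_congr rfl fun y _ => ?_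
        by_cases hy : x ⊓ y = ⊥ ∧ x ⊔ y = ⊤ <;> simp [hy]
end

section
/- Let L be a finite lattice with minimum element 0 and maximum element 1, and let μ denote its Möbius function. If there exists an element x ∈ L that has no complement in L, then μ(0,1) = 0. -/
open Finset

theorem wellFoundedLT_of_locallyFiniteOrder {α : Type*} [PartialOrder α] [OrderBot α]
    [LocallyFiniteOrder α] : WellFoundedLT α :=
  ⟨Subrelation.wf (fun {x y} (h : x < y) ↦ card_lt_card (Icc_ssubset_Icc_right bot_le le_rfl h))
    (InvImage.wf (fun x : α ↦ #(Icc ⊥ x)) wellFounded_lt)⟩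

section Weisner

variable {𝕜 L : Type*} [AddCommGroup 𝕜] [One 𝕜] [Lattice L] [OrderBot L] [LocallyFiniteOrder L]
  [DecidableEq L]

open IncidenceAlgebra

lemma filter_Icc_bot_sup_eq {a v w : L} (hvw : v ≤ w) :
    {z ∈ Icc ⊥ w | z ⊔ a = v} = {z ∈ Icc ⊥ v | z ⊔ a = v} := by
  ext z
  simp only [mem_filter, mem_Icc, bot_le, true_and, and_congr_left_iff]
  rintro rfl
  exact ⟨fun _ ↦ le_sup_left, fun h ↦ h.trans hvw⟩

/-- Weisner's theorem. -/
theorem sum_mu_bot_filter_sup_eq_eq_zero {a : L} (ha : ⊥ < a) :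
    ∀ w, a ≤ w → ∑ z ∈ Icc ⊥ w with z ⊔ a = w, mu 𝕜 ⊥ z = 0 := by
  have := wellFoundedLT_of_locallyFiniteOrder (α := L)
  intro w
  induction w using WellFoundedLT.induction with
  | _ w ih =>
    intro haw
    have hsum : ∑ v ∈ Icc a w, ∑ z ∈ Icc ⊥ v with z ⊔ a = v, mu 𝕜 ⊥ z = 0 := by
      calc ∑ v ∈ Icc a w, ∑ z ∈ Icc ⊥ v with z ⊔ a = v, mu 𝕜 ⊥ z
          = ∑ v ∈ Icc a w, ∑ z ∈ Icc ⊥ w with z ⊔ a = v, mu 𝕜 ⊥ z :=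
            sum_congr rfl fun v hv ↦ by rw [filter_Icc_bot_sup_eq (mem_Icc.1 hv).2]
        _ = ∑ z ∈ Icc ⊥ w, mu 𝕜 ⊥ z :=
            sum_fiberwise_of_maps_to (fun z hz ↦
              mem_Icc.2 ⟨le_sup_right, sup_le (mem_Icc.1 hz).2 haw⟩) _
        _ = 0 := by rw [sum_Icc_mu_right, if_neg (ha.trans_le haw).ne]
    rwa [← Ico_insert_right haw, sum_insert right_notMem_Ico,
      sum_eq_zero fun v hv ↦ ih v (mem_Ico.1 hv).2 (mem_Ico.1 hv).1, add_zero] at hsum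

theorem exists_lt_sup_eq_mu_ne_zero {c y : L} (hc : ⊥ < c) (hcy : c ≤ y)
    (hy : mu 𝕜 ⊥ y ≠ 0) :
    ∃ x < y, x ⊔ c = y ∧ mu 𝕜 ⊥ x ≠ 0 := by
  have hy_mem : y ∈ {z ∈ Icc ⊥ y | z ⊔ c = y} := by simp [hcy]
  have hrest := sum_mu_bot_filter_sup_eq_eq_zero (𝕜 := 𝕜) hc y hcy
  rw [← add_sum_erase _ _ hy_mem] at hrest
  obtain ⟨x, hx, hμx⟩ := exists_ne_zero_of_sum_ne_zero fun h ↦ hy (by rwa [h, add_zero] at hrest)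
  obtain ⟨hxy, hx_mem⟩ := mem_erase.1 hx
  obtain ⟨hx_le, hxc⟩ := mem_filter.1 hx_mem
  exact ⟨x, lt_of_le_of_ne (mem_Icc.1 hx_le).2 hxy, hxc, hμx⟩

theorem exists_inf_eq_bot_le_sup_of_mu_ne_zero (a : L) :
    ∀ y, mu 𝕜 ⊥ y ≠ 0 → ∃ z ≤ y, a ⊓ z = ⊥ ∧ y ≤ a ⊔ z := by
  have := wellFoundedLT_of_locallyFiniteOrder (α := L)
  intro y
  induction y using WellFoundedLT.induction with
  | _ y ih =>
    intro hy
    rcases eq_bot_or_bot_lt (a ⊓ y) with hay | hay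
    · exact ⟨y, le_rfl, hay, le_sup_right⟩
    obtain ⟨x, hxy, hx_sup, hμx⟩ := exists_lt_sup_eq_mu_ne_zero hay inf_le_right hy
    obtain ⟨z, hzx, haz, hx_le⟩ := ih x hxy hμx
    refine ⟨z, hzx.trans hxy.le, haz, ?_⟩
    calc y = x ⊔ a ⊓ y := hx_sup.symm
      _ ≤ a ⊔ z := sup_le hx_le (inf_le_left.trans le_sup_left)

end Weisner

/-- If some element of a finite bounded lattice has no complement, then the
Möbius number of the lattice is zero. -/
theorem mu_eq_zero_of_no_complement {L : Type*} [Lattice L] [BoundedOrder L] [Fintype L]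
    (x : L) (hx : ∀ y : L, ¬ (x ⊓ y = ⊥ ∧ x ⊔ y = ⊤)) :
    latticeMu L ⊥ ⊤ = 0 := by
  unfold latticeMu
  classical
  let := Fintype.toLocallyFiniteOrder (α := L)
  by_contra hμ
  obtain ⟨y, -, hxy, hy⟩ := exists_inf_eq_bot_le_sup_of_mu_ne_zero x ⊤ hμ
  exact hx y ⟨hxy, top_le_iff.1 hy⟩
end

section
/- Let G be a finite group, let H be a normal subgroup of G, and let H^⊥ denote the set of complements of H in the subgroup lattice of G. Then μ(⊥, G) = Σ_{K ∈ H^⊥} μ(⊥, K) · μ(K, G), where ⊥ denotes the trivial subgroup. -/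
open Finset

/-- The Möbius function of the subgroup lattice of a finite group `G`,
evaluated at a pair of subgroups. -/
noncomputable def subgroupMu (G : Type*) [Group G] [Finite G] (H K : Subgroup G) : ℤ :=
  letI : Fintype (Subgroup G) := Fintype.ofFinite _
  letI : DecidableEq (Subgroup G) := Classical.decEq _
  letI : @DecidableRel (Subgroup G) (Subgroup G) (· < ·) := Classical.decRel _
  letI : @DecidableRel (Subgroup G) (Subgroup G) (· ≤ ·) := Classical.decRel _
  letI := Fintype.toLocallyFiniteOrder (α := Subgroup G)
  IncidenceAlgebra.mu ℤ H K

/-- The Möbius number of a finite group `G`: the value `μ(⊥, ⊤)` of the Möbius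
function of its lattice of subgroups. -/
noncomputable def muGrp (G : Type*) [Group G] [Finite G] : ℤ :=
  subgroupMu G ⊥ ⊤

noncomputable instance fintypeSubgroupOfFinite (G : Type*) [Group G] [Finite G] :
    Fintype (Subgroup G) := Fintype.ofFinite _

/-!
Writing the indicators `[a ⊓ y = ⊥]` and `[x ⊔ z = ⊤]` as `∑_{z ≤ a ⊓ y} μ(⊥, z)` and
`∑_{w ≥ x ⊔ z} μ(w, ⊤)` and exchanging summations gives Weisner's identity
`∑_{x ⊔ z = ⊤} μ(⊥, x) = [z = ⊥] μ(⊥, ⊤)` and, one step further, Crapo's formula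
`μ(⊥, ⊤) = ∑ μ(⊥, x) μ(y, ⊤)` over the pairs `x ≤ y` with `a ⊔ x = ⊤` and `a ⊓ y = ⊥`.
If `a` is a modular element, as a normal subgroup is by Dedekind's law, such a pair satisfies
`y = (x ⊔ a) ⊓ y = x ⊔ (a ⊓ y) = x`, so only the complements of `a` contribute.
-/

open scoped Pointwise

section ModularElement

variable {α : Type*} [Lattice α]

def IsModularElement (a : α) : Prop :=
  ∀ ⦃x y : α⦄, x ≤ y → (x ⊔ a) ⊓ y ≤ x ⊔ a ⊓ y

theorem IsModularElement.eq_of_le_of_sup_eq_top_of_inf_eq_bot [BoundedOrder α] {a x y : α}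
    (ha : IsModularElement a) (hxy : x ≤ y) (hx : a ⊔ x = ⊤) (hy : a ⊓ y = ⊥) : x = y :=
  le_antisymm hxy <| by simpa [sup_comm x, hx, hy] using ha hxy

end ModularElement

theorem Subgroup.Normal.isModularElement {G : Type*} [Group G] {N : Subgroup G}
    (hN : N.Normal) : IsModularElement N := by
  intro x y hxy g hg
  have hmem : g ∈ (x : Set G) * ↑(N ⊓ y) := by
    rwa [mul_inf_assoc x N y hxy, ← mul_normal (hN := hN)]
  exact mul_subset (SetLike.coe_subset_coe.2 le_sup_left) (SetLike.coe_subset_coe.2 le_sup_right)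
    hmem

namespace IncidenceAlgebra

section PartialOrder

variable {𝕜 α : Type*} [Ring 𝕜] [PartialOrder α] [Fintype α] [DecidableEq α] [DecidableLE α]
  [LocallyFiniteOrder α]

lemma sum_mu_bot_le [OrderBot α] (u : α) :
    ∑ x, (if x ≤ u then mu 𝕜 ⊥ x else 0) = if u = ⊥ then 1 else 0 := by
  rw [← sum_filter, show univ.filter (· ≤ u) = Icc ⊥ u by ext; simp, sum_Icc_mu_right]
  simp only [eq_comm]

lemma sum_ge_mu_top [OrderTop α] (v : α) :
    ∑ w, (if v ≤ w then mu 𝕜 w ⊤ else 0) = if v = ⊤ then 1 else 0 := by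
  rw [← sum_filter, show univ.filter (v ≤ ·) = Icc v ⊤ by ext; simp, sum_Icc_mu_left]

end PartialOrder

section Lattice

variable {𝕜 α : Type*} [Ring 𝕜] [Lattice α] [BoundedOrder α] [Fintype α] [DecidableEq α]
  [DecidableLE α] [LocallyFiniteOrder α]

lemma sum_le_inf_eq_bot_mu_top (a x : α) :
    ∑ y, (if x ≤ y ∧ a ⊓ y = ⊥ then mu 𝕜 y ⊤ else 0) =
      ∑ z, (if z ≤ a ∧ x ⊔ z = ⊤ then mu 𝕜 ⊥ z else 0) := by
  calc ∑ y, (if x ≤ y ∧ a ⊓ y = ⊥ then mu 𝕜 y ⊤ else 0)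
      = ∑ y, ∑ z, (if z ≤ a ∧ x ⊔ z ≤ y then mu 𝕜 ⊥ z * mu 𝕜 y ⊤ else 0) := by
        refine sum_congr rfl fun y _ => ?_
        by_cases hxy : x ≤ y
        · simp only [sup_le_iff, hxy, true_and, ← le_inf_iff]
          rw [← sum_filter, ← sum_mul, sum_filter, sum_mu_bot_le, boole_mul]
        · simp [hxy, sup_le_iff]
    _ = ∑ z, (if z ≤ a ∧ x ⊔ z = ⊤ then mu 𝕜 ⊥ z else 0) := by
        rw [sum_comm]
        refine sum_congr rfl fun z _ => ?_
        by_cases hza : z ≤ a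
        · simp only [hza, true_and]
          rw [← sum_filter, ← mul_sum, sum_filter, sum_ge_mu_top, mul_boole]
        · simp [hza]

lemma sum_sup_eq_top_mu_bot (z : α) :
    ∑ x, (if x ⊔ z = ⊤ then mu 𝕜 ⊥ x else 0) = if z = ⊥ then mu 𝕜 (⊥ : α) ⊤ else 0 := by
  have h := sum_le_inf_eq_bot_mu_top (𝕜 := 𝕜) ⊤ z
  simp only [le_top, true_and, top_inf_eq, sup_comm z] at h
  simp_rw [← h, and_comm, ite_and, sum_ite_eq', mem_univ, if_true, le_bot_iff]

theorem mu_bot_top_eq_sum_crapo (a : α) :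
    mu 𝕜 (⊥ : α) ⊤ =
      ∑ x, ∑ y, if x ≤ y ∧ a ⊔ x = ⊤ ∧ a ⊓ y = ⊥ then mu 𝕜 ⊥ x * mu 𝕜 y ⊤ else 0 := by
  have sum_y (x : α) :
      ∑ y, (if x ≤ y ∧ a ⊔ x = ⊤ ∧ a ⊓ y = ⊥ then mu 𝕜 ⊥ x * mu 𝕜 y ⊤ else 0) =
        ∑ z, if z ≤ a ∧ x ⊔ z = ⊤ then mu 𝕜 ⊥ x * mu 𝕜 ⊥ z else 0 := by
    by_cases hx : a ⊔ x = ⊤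
    · simp only [hx, true_and]
      rw [← sum_filter, ← mul_sum, sum_filter, sum_le_inf_eq_bot_mu_top, mul_sum]
      simp only [mul_ite, mul_zero]
    · refine (sum_eq_zero fun y _ => by simp [hx]).trans (sum_eq_zero fun z _ => ?_).symm
      refine if_neg fun ⟨hza, hxz⟩ => hx (top_le_iff.1 ?_)
      exact hxz ▸ sup_comm x z ▸ sup_le_sup_right hza x
  have sum_x (z : α) :
      ∑ x, (if z ≤ a ∧ x ⊔ z = ⊤ then mu 𝕜 ⊥ x * mu 𝕜 ⊥ z else 0) =
        if z = ⊥ then mu 𝕜 (⊥ : α) ⊤ else 0 := by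
    by_cases hza : z ≤ a
    · simp only [hza, true_and]
      rw [← sum_filter, ← sum_mul, sum_filter, sum_sup_eq_top_mu_bot]
      split_ifs with hz <;> simp [hz]
    · have hz : z ≠ ⊥ := fun h => hza (h ▸ bot_le)
      simp [hza, hz]
  simp_rw [sum_y]
  rw [sum_comm]
  simp_rw [sum_x, sum_ite_eq', mem_univ, if_true]

end Lattice

end IncidenceAlgebra

open IncidenceAlgebra in
theorem IsModularElement.mu_bot_top_eq_sum_compl {𝕜 α : Type*} [Ring 𝕜] [Lattice α]
    [BoundedOrder α] [Fintype α] [DecidableEq α] [DecidableLE α] [LocallyFiniteOrder α] {a : α}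
    (ha : IsModularElement a) :
    mu 𝕜 (⊥ : α) ⊤ =
      ∑ K ∈ univ.filter (fun K : α => a ⊓ K = ⊥ ∧ a ⊔ K = ⊤), mu 𝕜 ⊥ K * mu 𝕜 K ⊤ := by
  have diagonal (x y : α) : (x ≤ y ∧ a ⊔ x = ⊤ ∧ a ⊓ y = ⊥) ↔ (x = y ∧ a ⊓ y = ⊥ ∧ a ⊔ y = ⊤) :=
    ⟨fun ⟨hxy, hx, hy⟩ => by
      obtain rfl := ha.eq_of_le_of_sup_eq_top_of_inf_eq_bot hxy hx hy
      exact ⟨rfl, hy, hx⟩,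
     by rintro ⟨rfl, hy, hx⟩; exact ⟨le_rfl, hx, hy⟩⟩
  rw [sum_filter, mu_bot_top_eq_sum_crapo a]
  simp_rw [diagonal, ite_and, sum_ite_eq, mem_univ, if_true]

open scoped Classical in
/-- Crapo's complement theorem for a normal subgroup of a finite group. -/
theorem crapo_normal_subgroup {G : Type*} [Group G] [Finite G]
    (H : Subgroup G) (hH : H.Normal) :
    subgroupMu G ⊥ ⊤ =
      ∑ K ∈ Finset.univ.filter (fun K : Subgroup G => H ⊓ K = ⊥ ∧ H ⊔ K = ⊤),
        subgroupMu G ⊥ K * subgroupMu G K ⊤ := by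
  let := Fintype.toLocallyFiniteOrder (α := Subgroup G)
  exact hH.isModularElement.mu_bot_top_eq_sum_compl
end

section
/- Let G = H × K be a direct product of finite groups, identify H with the subgroup H × 1 of G, and let φ_K : G → K be the projection onto K. If K' is a complement of H × 1 in the subgroup lattice of G, then: the restriction of φ_K to K' is injective, φ_K(K') = K, and the projection of K' to H is a subgroup H_0 of H that is isomorphic to a quotient of K. -/
/-- Structure of complements to a factor in a direct product. -/
theorem complement_of_factor_in_direct_product {H K : Type*} [Group H] [Group K]
    [Finite H] [Finite K]
    (K' : Subgroup (H × K))
    (hcomp : (Subgroup.prod ⊤ ⊥ : Subgroup (H × K)) ⊓ K' = ⊥ ∧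
      (Subgroup.prod ⊤ ⊥ : Subgroup (H × K)) ⊔ K' = ⊤) :
    Function.Injective (fun x : K' => (MonoidHom.snd H K) (x : H × K)) ∧
    K'.map (MonoidHom.snd H K) = ⊤ ∧
    ∃ f : K →* (K'.map (MonoidHom.fst H K)), Function.Surjective f := by
  obtain ⟨hinf, hsup⟩ := hcomp
  have hinj : Function.Injective (fun x : K' => (MonoidHom.snd H K) (x : H × K)) := by
    intro x y hxy
    simp only [MonoidHom.coe_snd] at hxy
    have hmem : ((x : H × K) * (y : H × K)⁻¹) ∈
        (Subgroup.prod ⊤ ⊥ : Subgroup (H × K)) ⊓ K' := by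
      constructor
      · refine Subgroup.mem_prod.2 ⟨Subgroup.mem_top _, ?_⟩
        simp [Subgroup.mem_bot, hxy]
      · exact K'.mul_mem x.2 (K'.inv_mem y.2)
    rw [hinf, Subgroup.mem_bot, mul_inv_eq_one] at hmem
    exact Subtype.ext hmem
  have hmapbot : (Subgroup.prod ⊤ ⊥ : Subgroup (H × K)).map (MonoidHom.snd H K) = ⊥ := by
    ext k
    simp only [Subgroup.mem_map, Subgroup.mem_prod, Subgroup.mem_bot, Subgroup.mem_top,
      MonoidHom.coe_snd]
    constructor
    · rintro ⟨⟨h, k'⟩, ⟨-, hk'⟩, rfl⟩; exact hk'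
    · rintro rfl; exact ⟨(1, 1), ⟨trivial, rfl⟩, rfl⟩
  have hsurj : K'.map (MonoidHom.snd H K) = ⊤ := by
    have := congrArg (Subgroup.map (MonoidHom.snd H K)) hsup
    rw [Subgroup.map_sup, hmapbot, bot_sup_eq,
      Subgroup.map_top_of_surjective _ Prod.snd_surjective] at this
    exact this
  refine ⟨hinj, hsurj, ?_⟩
  have hsurj' : Function.Surjective (fun x : K' => (MonoidHom.snd H K) (x : H × K)) := by
    intro k
    have : k ∈ K'.map (MonoidHom.snd H K) := hsurj ▸ Subgroup.mem_top k
    obtain ⟨x, hx, hxk⟩ := this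
    exact ⟨⟨x, hx⟩, hxk⟩
  let e : K' ≃* K :=
    MulEquiv.ofBijective ((MonoidHom.snd H K).comp K'.subtype) ⟨hinj, hsurj'⟩
  let φ : K' →* H := (MonoidHom.fst H K).comp K'.subtype
  have hrange : φ.range = K'.map (MonoidHom.fst H K) := by
    rw [MonoidHom.range_comp, Subgroup.range_subtype]
  refine ⟨(MulEquiv.subgroupCongr hrange).toMonoidHom.comp
    (φ.rangeRestrict.comp e.symm.toMonoidHom), ?_⟩
  intro y
  obtain ⟨x, hx⟩ := (MulEquiv.subgroupCongr hrange).surjective y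
  obtain ⟨z, hz⟩ := φ.rangeRestrict_surjective x
  exact ⟨e z, by simp [← hx, ← hz]⟩
end

section
/- Let H and K be finite groups and suppose that K has no nontrivial homomorphic image isomorphic to a subgroup of H (that is, for every normal subgroup N of K with N ≠ K, the quotient K/N is not isomorphic to any subgroup of H). Then μ(H × K) = μ(H) · μ(K). -/
open Finset

/-!
Write `μ X` for `μ(⊥, X)` in the subgroup lattice of `H × K`. The hypothesis says that every
homomorphism `K →* H` is trivial, so a subgroup `X` that projects onto `K` and meets `H × 1`
trivially, being the graph of such a homomorphism, is `1 × K`. Weisner's theorem for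
`b = X ⊓ (H × 1)` then shows, by induction on `X`, that `μ X = 0` whenever `X` projects onto `K`
but does not contain `1 × K`. Weisner's theorem for `b = A × 1` below `A × K` therefore only sees
the subgroups `B × K` with `B ≤ A`: the sums `∑_{B ≤ A} μ (B × K)` vanish for `A ≠ ⊥`, while
`μ (1 × K) = μ_K(⊥, ⊤)`. Möbius inversion in the subgroup lattice of `H` gives
`μ (A × K) = μ_H(⊥, A) · μ_K(⊥, ⊤)`.
-/

open IncidenceAlgebra

section Order

variable {𝕜 α β : Type*}

lemma OrderEmbedding.map_finsetIco [Preorder α] [Preorder β] [LocallyFiniteOrder α]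
    [LocallyFiniteOrder β] (f : α ↪o β) (hf : (Set.range f).OrdConnected) (a b : α) :
    (Ico a b).map f.toEmbedding = Ico (f a) (f b) := by
  rw [← coe_inj, coe_map, coe_Ico, coe_Ico]
  exact f.image_Ico hf a b

namespace IncidenceAlgebra

lemma mu_map_of_ordConnected [AddCommGroup 𝕜] [One 𝕜] [PartialOrder α] [PartialOrder β]
    [LocallyFiniteOrder α] [LocallyFiniteOrder β] [DecidableEq α] [DecidableEq β]
    (f : α ↪o β) (hf : (Set.range f).OrdConnected) (a b : α) :
    mu 𝕜 (f a) (f b) = mu 𝕜 a b := by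
  obtain rfl | hab := eq_or_ne a b
  · simp
  rw [mu_eq_neg_sum_Ico_of_ne hab, mu_eq_neg_sum_Ico_of_ne (f.injective.ne hab),
    ← f.map_finsetIco hf, sum_map]
  exact congrArg _ (sum_congr rfl fun x hx => mu_map_of_ordConnected f hf a x)
termination_by (Icc a b).card
decreasing_by
  obtain ⟨hax, hxb⟩ := mem_Ico.1 hx
  exact card_lt_card (Icc_ssubset_Icc_right (hax.trans hxb.le) le_rfl hxb)

/-- Weisner's theorem. -/
theorem sum_mu_bot_of_sup_eq [Ring 𝕜] [Lattice α] [OrderBot α] [LocallyFiniteOrder α]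
    [DecidableEq α] {b : α} (hb : b ≠ ⊥) (z : α) :
    ∑ x ∈ Iic z with x ⊔ b = z, mu 𝕜 ⊥ x = 0 := by
  classical
  have hcum (z : α) : ∑ y ∈ Iic z, ∑ x ∈ Iic y with x ⊔ b = y, mu 𝕜 ⊥ x = 0 := by
    calc ∑ y ∈ Iic z, ∑ x ∈ Iic y with x ⊔ b = y, mu 𝕜 ⊥ x
        = ∑ y ∈ Iic z, ∑ x ∈ Iic z with x ⊔ b = y, mu 𝕜 ⊥ x := by
          refine sum_congr rfl fun y hy => sum_congr ?_ fun _ _ => rfl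
          ext x
          simp only [mem_filter, mem_Iic] at hy ⊢
          constructor
          · rintro ⟨-, rfl⟩; exact ⟨le_sup_left.trans hy, rfl⟩
          · rintro ⟨-, rfl⟩; exact ⟨le_sup_left, rfl⟩
      _ = ∑ x ∈ Iic z with b ≤ z, mu 𝕜 ⊥ x := by
          rw [sum_fiberwise_eq_sum_filter]
          refine sum_congr (filter_congr fun x hx => ?_) fun _ _ => rfl
          simp only [mem_Iic] at hx ⊢
          exact ⟨fun h => le_sup_right.trans h, fun h => sup_le hx h⟩
      _ = 0 := by
          rw [sum_filter]
          split_ifs with hbz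
          · rw [← Icc_bot, sum_Icc_mu_right, if_neg (ne_bot_of_le_ne_bot hb hbz).symm]
          · exact sum_const_zero
  simpa [hcum] using moebius_inversion_bot _ 0 (fun z => (hcum z).symm) z

end IncidenceAlgebra

end Order

noncomputable instance Subgroup.instLocallyFiniteOrderOfFinite {G : Type*} [Group G] [Finite G] :
    LocallyFiniteOrder (Subgroup G) := by
  classical
  have := Fintype.ofFinite (Subgroup G)
  exact Fintype.toLocallyFiniteOrder

lemma subgroupMu_eq_mu {G : Type*} [Group G] [Finite G] [DecidableEq (Subgroup G)]
    (A B : Subgroup G) : subgroupMu G A B = mu ℤ A B := by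
  unfold subgroupMu
  congr!

section Subgroup

variable {𝕜 G H K : Type*} [Group G] [Group H] [Group K]

lemma mu_bot_range_of_injective [Ring 𝕜] [Finite G] [Finite H] [DecidableEq (Subgroup G)]
    [DecidableEq (Subgroup H)] {f : H →* G} (hf : Function.Injective f) :
    mu 𝕜 (⊥ : Subgroup G) f.range = mu 𝕜 (⊥ : Subgroup H) ⊤ := by
  let e : Subgroup H ↪o Subgroup G :=
    .ofMapLEIff (Subgroup.map f) fun _ _ => Subgroup.map_le_map_iff_of_injective hf
  have hrange : Set.range e = Set.Iic f.range := by
    ext x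
    refine ⟨?_, fun hx => ⟨x.comap f, Subgroup.map_comap_eq_self hx⟩⟩
    rintro ⟨y, rfl⟩
    exact Subgroup.map_le_range f y
  have := mu_map_of_ordConnected (𝕜 := 𝕜) e (hrange ▸ Set.ordConnected_Iic) ⊥ ⊤
  simpa [e, ← MonoidHom.range_eq_map] using this

lemma MonoidHom.eq_one_of_forall_quotient_not_equiv
    (h : ∀ (N : Subgroup K) [N.Normal], N ≠ ⊤ → ∀ H' : Subgroup H, ¬ Nonempty ((K ⧸ N) ≃* H'))
    (φ : K →* H) : φ = 1 :=
  MonoidHom.ker_eq_top_iff.1 <| by_contra fun hker =>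
    h φ.ker hker φ.range ⟨QuotientGroup.quotientKerEquivRange φ⟩

lemma ker_fst_le_of_disjoint_ker_snd (hHom : ∀ φ : K →* H, φ = 1) {x : Subgroup (H × K)}
    (hx : x.map (MonoidHom.snd H K) = ⊤) (hdisj : Disjoint x (MonoidHom.snd H K).ker) :
    (MonoidHom.fst H K).ker ≤ x := by
  let p := (MonoidHom.snd H K).comp x.subtype
  have hinj : Function.Injective p := by
    refine (injective_iff_map_eq_one p).2 fun y hy => Subtype.ext ?_
    exact Subgroup.disjoint_def.1 hdisj y.2 hy
  have hsurj : Function.Surjective p := by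
    rw [← MonoidHom.range_eq_top, MonoidHom.range_comp, Subgroup.range_subtype, hx]
  let e := MulEquiv.ofBijective p ⟨hinj, hsurj⟩
  have hfst (k : K) : (e.symm k : H × K).1 = 1 :=
    DFunLike.congr_fun (hHom ((MonoidHom.fst H K).comp (x.subtype.comp e.symm.toMonoidHom))) k
  rintro ⟨a, k⟩ (ha : a = 1)
  have hgraph : (e.symm k : H × K) = (a, k) := Prod.ext (ha ▸ hfst k) (e.apply_symm_apply k)
  exact hgraph ▸ (e.symm k).2

lemma mu_bot_eq_zero_of_map_snd_eq_top [Ring 𝕜] [Finite H] [Finite K]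
    [DecidableEq (Subgroup (H × K))] (hHom : ∀ φ : K →* H, φ = 1) {x : Subgroup (H × K)}
    (hx : x.map (MonoidHom.snd H K) = ⊤) (hker : ¬ (MonoidHom.fst H K).ker ≤ x) :
    mu 𝕜 ⊥ x = 0 := by
  induction x using WellFoundedLT.induction with
  | _ x ih =>
  set b := x ⊓ (MonoidHom.snd H K).ker
  have hb : b ≠ ⊥ := fun hb =>
    hker (ker_fst_le_of_disjoint_ker_snd hHom hx (disjoint_iff.2 hb))
  have hsum := sum_mu_bot_of_sup_eq (𝕜 := 𝕜) hb x
  rwa [sum_eq_single_of_mem x (by simp [b]) fun y hy hyx => ?_] at hsum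
  obtain ⟨hyx', hyb⟩ := mem_filter.1 hy
  refine ih y (lt_of_le_of_ne (mem_Iic.1 hyx') hyx) ?_ fun h => hker (h.trans (mem_Iic.1 hyx'))
  rw [← hx, ← hyb, Subgroup.map_sup, (Subgroup.map_eq_bot_iff _).2 inf_le_right, sup_bot_eq]

end Subgroup

section Product

variable {𝕜 H K : Type*} [Group H] [Group K]

lemma comap_fst_sup_map_inl {A B : Subgroup H} (hBA : B ≤ A) :
    B.comap (MonoidHom.fst H K) ⊔ A.map (MonoidHom.inl H K) = A.comap (MonoidHom.fst H K) := by
  have hmap : (A.map (MonoidHom.inl H K)).map (MonoidHom.fst H K) = A := by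
    rw [Subgroup.map_map, MonoidHom.fst_comp_inl, Subgroup.map_id]
  refine le_antisymm (sup_le (Subgroup.comap_mono hBA) (Subgroup.map_le_iff_le_comap.1 hmap.le)) ?_
  calc A.comap (MonoidHom.fst H K)
      = A.map (MonoidHom.inl H K) ⊔ (MonoidHom.fst H K).ker := by
        rw [← Subgroup.comap_map_eq, hmap]
    _ ≤ A.map (MonoidHom.inl H K) ⊔ B.comap (MonoidHom.fst H K) :=
        sup_le_sup_left (Subgroup.ker_le_comap _ _) _
    _ = _ := sup_comm _ _

lemma sum_Iic_mu_bot_comap_fst [Ring 𝕜] [Finite H] [Finite K] [DecidableEq (Subgroup H)]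
    [DecidableEq (Subgroup K)] [DecidableEq (Subgroup (H × K))] (hHom : ∀ φ : K →* H, φ = 1)
    (A : Subgroup H) :
    ∑ B ∈ Iic A, mu 𝕜 ⊥ (B.comap (MonoidHom.fst H K)) =
      if A = ⊥ then mu 𝕜 (⊥ : Subgroup K) ⊤ else 0 := by
  classical
  split_ifs with hA
  · have hker : (MonoidHom.fst H K).ker = (MonoidHom.inr H K).range := by
      ext ⟨a, k⟩
      simp [Subgroup.mem_prod, eq_comm]
    rw [hA, Iic_bot, sum_singleton, MonoidHom.comap_bot, hker,
      mu_bot_range_of_injective fun _ _ h => congrArg Prod.snd h]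
  set b := A.map (MonoidHom.inl H K)
  set z := A.comap (MonoidHom.fst H K)
  have hb : b ≠ ⊥ := by
    rwa [Ne, Subgroup.map_eq_bot_iff_of_injective _ fun _ _ h => congrArg Prod.fst h]
  calc ∑ B ∈ Iic A, mu 𝕜 ⊥ (B.comap (MonoidHom.fst H K))
      = ∑ x ∈ {x ∈ Iic z | x ⊔ b = z} with (MonoidHom.fst H K).ker ≤ x, mu 𝕜 ⊥ x := by
        refine sum_nbij' (·.comap (MonoidHom.fst H K)) (·.map (MonoidHom.fst H K))
          (fun B hB => ?_) (fun x hx => ?_) (fun B _ => ?_) (fun x hx => ?_) fun _ _ => rfl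
        · simp only [mem_filter, mem_Iic] at hB ⊢
          exact ⟨⟨Subgroup.comap_mono hB, comap_fst_sup_map_inl hB⟩, Subgroup.ker_le_comap _ _⟩
        · simp only [mem_filter, mem_Iic] at hx ⊢
          exact Subgroup.map_le_iff_le_comap.2 hx.1.1
        · exact Subgroup.map_comap_eq_self_of_surjective Prod.fst_surjective B
        · rw [Subgroup.comap_map_eq, sup_eq_left.2 (mem_filter.1 hx).2]
    _ = ∑ x ∈ Iic z with x ⊔ b = z, mu 𝕜 ⊥ x := by
        refine sum_filter_of_ne fun x hx hμ => not_not.1 fun hker => hμ ?_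
        refine mu_bot_eq_zero_of_map_snd_eq_top hHom ?_ hker
        have hbsnd : b.map (MonoidHom.snd H K) = ⊥ := by
          rw [Subgroup.map_map, MonoidHom.snd_comp_inl, Subgroup.map_one_eq_bot]
        rw [← sup_bot_eq (x.map _), ← hbsnd, ← Subgroup.map_sup, (mem_filter.1 hx).2, eq_top_iff]
        exact fun k _ => ⟨(1, k), one_mem A, rfl⟩
    _ = 0 := sum_mu_bot_of_sup_eq hb z

lemma mu_bot_comap_fst [Ring 𝕜] [Finite H] [Finite K] [DecidableEq (Subgroup H)]
    [DecidableEq (Subgroup K)] [DecidableEq (Subgroup (H × K))] (hHom : ∀ φ : K →* H, φ = 1)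
    (A : Subgroup H) :
    mu 𝕜 ⊥ (A.comap (MonoidHom.fst H K)) = mu 𝕜 ⊥ A * mu 𝕜 (⊥ : Subgroup K) ⊤ := by
  rw [moebius_inversion_bot _ _ (fun B => (sum_Iic_mu_bot_comap_fst hHom B).symm) A]
  simp [mul_ite]

end Product

/-- If `K` has no nontrivial homomorphic image isomorphic to a subgroup of `H`,
then `μ(H × K) = μ(H) · μ(K)`. -/
theorem muGrp_prod_of_no_common_image {H K : Type*} [Group H] [Group K]
    [Finite H] [Finite K]
    (h : ∀ (N : Subgroup K) [N.Normal], N ≠ ⊤ →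
      ∀ H' : Subgroup H, ¬ Nonempty ((K ⧸ N) ≃* H')) :
    muGrp (H × K) = muGrp H * muGrp K := by
  classical
  simp only [muGrp, subgroupMu_eq_mu]
  rw [← Subgroup.comap_top (MonoidHom.fst H K),
    mu_bot_comap_fst (MonoidHom.eq_one_of_forall_quotient_not_equiv h)]
end

section
/- Let T be a finite nonabelian simple group, let n ≥ 2, let G = T^n, let T_1 = T × 1 × ⋯ × 1 be the first factor and K = 1 × T^{n-1} the product of the remaining factors. If K' is a complement of T_1 in the subgroup lattice of G such that the projection of K' onto the first factor is all of T_1 (equivalently, K' ≠ K), then K' is a maximal subgroup of G: the only subgroups J with K' ≤ J ≤ G are J = K' and J = G. -/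
open scoped Pointwise


/-- A complement of the first factor of `T^n` projecting onto the whole first
factor is a maximal subgroup. -/
theorem diagonal_complement_is_maximal (T : Type*) [Group T] [Finite T]
    (hsimple : IsSimpleGroup T) (hnonab : ¬ ∀ a b : T, a * b = b * a)
    (n : ℕ) [NeZero n] (hn : 2 ≤ n)
    (K' : Subgroup (Fin n → T))
    (hcomp : (Subgroup.pi ({0}ᶜ : Set (Fin n)) fun _ => (⊥ : Subgroup T)) ⊓ K' = ⊥ ∧
      (Subgroup.pi ({0}ᶜ : Set (Fin n)) fun _ => (⊥ : Subgroup T)) ⊔ K' = ⊤)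
    (hproj : K'.map (Pi.evalMonoidHom (fun _ : Fin n => T) 0) = ⊤) :
    ∀ J : Subgroup (Fin n → T), K' ≤ J → J = K' ∨ J = ⊤ := by
  obtain ⟨hinf, hsup⟩ := hcomp
  set H : Subgroup (Fin n → T) := Subgroup.pi ({0}ᶜ : Set (Fin n)) fun _ => ⊥ with hH
  have memH : ∀ x : Fin n → T, x ∈ H ↔ ∀ i, i ≠ 0 → x i = 1 := by
    intro x
    simp [hH, Subgroup.mem_pi]
  have hHnormal : H.Normal := by
    constructor
    intro x hx g
    rw [memH] at hx ⊢
    intro i hi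
    simp [hx i hi]
  intro J hJ
  set S : Subgroup T := (J ⊓ H).map (Pi.evalMonoidHom (fun _ : Fin n => T) 0) with hS
  have hSnormal : S.Normal := by
    constructor
    intro t ht u
    obtain ⟨x, hx, hxt⟩ := ht
    obtain ⟨k, hk, hku⟩ : ∃ k, k ∈ K' ∧ k 0 = u := by
      have : u ∈ K'.map (Pi.evalMonoidHom (fun _ : Fin n => T) 0) :=
        hproj ▸ Subgroup.mem_top u
      simpa using this
    refine ⟨k * x * k⁻¹, ⟨?_, ?_⟩, ?_⟩
    · exact J.mul_mem (J.mul_mem (hJ hk) hx.1) (J.inv_mem (hJ hk))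
    · exact hHnormal.conj_mem x hx.2 k
    · simp only [Pi.evalMonoidHom_apply, Pi.mul_apply, Pi.inv_apply] at hxt ⊢
      rw [hxt, hku]
  rcases hsimple.eq_bot_or_eq_top_of_normal S hSnormal with hbot | htop
  · -- S = ⊥ : J = K'
    left
    refine le_antisymm ?_ hJ
    intro j hj
    have hmem : j ∈ ((H : Set (Fin n → T)) * (K' : Set (Fin n → T))) := by
      rw [← Subgroup.normal_mul H K']
      show j ∈ (H ⊔ K')
      exact hsup ▸ Subgroup.mem_top j
    obtain ⟨h, hh, k, hk, hhk⟩ := hmem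
    have hhJ : h ∈ J ⊓ H := by
      refine ⟨?_, hh⟩
      have : h = j * k⁻¹ := by rw [← hhk]; group
      rw [this]
      exact J.mul_mem hj (J.inv_mem (hJ hk))
    have h0 : h 0 = 1 := by
      have : h 0 ∈ S := ⟨h, hhJ, rfl⟩
      rw [hbot] at this
      simpa using this
    have : h = 1 := by
      funext i
      by_cases hi : i = 0
      · simpa [hi] using h0
      · simpa using (memH h).mp hh i hi
    simp only [this, one_mul] at hhk
    exact hhk ▸ hk
  · -- S = ⊤ : J = ⊤
    right
    have hHle : H ≤ J := by
      intro h hh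
      have : h 0 ∈ S := htop ▸ Subgroup.mem_top (h 0)
      obtain ⟨x, hx, hx0⟩ := this
      have : x = h := by
        funext i
        by_cases hi : i = 0
        · simpa [hi] using hx0
        · rw [(memH h).mp hh i hi, (memH x).mp hx.2 i hi]
      rw [← this]; exact hx.1
    rw [eq_top_iff, ← hsup]
    exact sup_le hHle hJ
end

section
/- Let T be a finite nonabelian simple group, let n ≥ 1, let G = T^n, and let T_1 = T × 1 × ⋯ × 1 be the first factor. Then the number of complements of T_1 in the subgroup lattice of G is exactly 1 + (n-1)·A, where A is the cardinality of the automorphism group of T. -/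
section Aux
variable {T : Type*} [Group T] [Finite T]

lemma aux_center_eq_bot (hs : IsSimpleGroup T) (hnonab : ¬ ∀ a b : T, a * b = b * a) :
    Subgroup.center T = ⊥ := by
  rcases hs.eq_bot_or_eq_top_of_normal (Subgroup.center T) inferInstance with h | h
  · exact h
  · exact absurd (fun a b => (Subgroup.mem_center_iff.mp (h ▸ Subgroup.mem_top b) a)) hnonab

/-- classification of homs `T^ι →* T` for `T` finite nonabelian simple -/
lemma aux_hom_classify {ι : Type*} [Fintype ι] [DecidableEq ι]
    (hs : IsSimpleGroup T) (hnonab : ¬ ∀ a b : T, a * b = b * a)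
    (f : (∀ _ : ι, T) →* T) :
    f = 1 ∨ ∃ (i : ι) (φ : MulAut T),
      f = φ.toMonoidHom.comp (Pi.evalMonoidHom (fun _ => T) i) := by
  push_neg at hnonab
  obtain ⟨a₀, b₀, hab⟩ := hnonab
  have hT : Nontrivial T := ⟨a₀, 1, fun h => hab (h ▸ by simp)⟩
  set F : ι → (T →* T) := fun i => f.comp (MonoidHom.mulSingle (fun _ => T) i) with hF
  have hinj : ∀ i, F i = 1 ∨ Function.Injective (F i) := by
    intro i
    rcases hs.eq_bot_or_eq_top_of_normal (F i).ker inferInstance with h | h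
    · exact Or.inr ((F i).ker_eq_bot_iff.mp h)
    · left; ext x
      have : x ∈ (F i).ker := h ▸ Subgroup.mem_top x
      simpa [MonoidHom.mem_ker] using this
  have hcomm : ∀ i j : ι, i ≠ j → ∀ a b : T, Commute (F i a) (F j b) := by
    intro i j hij a b
    exact (Pi.mulSingle_commute hij a b).map f
  -- at most one nontrivial
  have huniq : ∀ i j : ι, i ≠ j → F i ≠ 1 → F j ≠ 1 → False := by
    intro i j hij hi hj
    have hiinj := (hinj i).resolve_left hi
    have hjinj := (hinj j).resolve_left hj
    have hc := hcomm i j hij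
    set ψ : T × T →* T := MonoidHom.mk' (fun p => F i p.1 * F j p.2) (by
      intro p q
      have h := (hc q.1 p.2).eq
      simp only [Prod.fst_mul, Prod.snd_mul, map_mul]
      rw [mul_assoc, ← mul_assoc (F i q.1), h, mul_assoc, mul_assoc]) with hψ
    have hψinj : Function.Injective ψ := by
      rw [injective_iff_map_eq_one]
      rintro ⟨a, b⟩ h
      simp only [hψ, MonoidHom.mk'_apply] at h
      have ha : a = 1 := by
        have hmem : ∀ a' : T, a' * a = a * a' := by
          intro a'
          have h1 : F i a = F j b⁻¹ := by
            rw [map_inv]; rw [eq_inv_iff_mul_eq_one]; exact h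
          have h2 : Commute (F i a') (F i a) := h1 ▸ hc a' b⁻¹
          have := h2.eq
          rw [← map_mul, ← map_mul] at this
          exact hiinj this
        have : a ∈ Subgroup.center T := Subgroup.mem_center_iff.mpr hmem
        rwa [aux_center_eq_bot hs (by push_neg; exact ⟨a₀, b₀, hab⟩), Subgroup.mem_bot] at this
      subst ha
      simp only [map_one, one_mul] at h
      have hb : b = 1 := hjinj (by rw [h, map_one])
      simp [hb]
    have hle := Nat.card_le_card_of_injective ψ hψinj
    rw [Nat.card_prod] at hle
    have h2 : 2 ≤ Nat.card T := Finite.one_lt_card_iff_nontrivial.mpr hT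
    nlinarith
  by_cases hall : ∀ i, F i = 1
  · left
    apply MonoidHom.pi_ext
    intro i x
    have := congrFun (congrArg (DFunLike.coe) (hall i)) x
    simpa [hF] using this
  · right
    push_neg at hall
    obtain ⟨i, hi⟩ := hall
    have hiinj := (hinj i).resolve_left hi
    have hbij : Function.Bijective (F i) := (Finite.injective_iff_bijective).mp hiinj
    refine ⟨i, MulEquiv.ofBijective (F i) hbij, ?_⟩
    apply MonoidHom.pi_ext
    intro j x
    by_cases hji : j = i
    · subst hji
      simp [MulEquiv.ofBijective, hF]
    · have hj1 : F j = 1 := by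
        by_contra hj
        exact huniq j i hji hj hi
      have := congrFun (congrArg (DFunLike.coe) hj1) x
      simp only [hF, MonoidHom.one_apply, MonoidHom.comp_apply,
        MonoidHom.mulSingle_apply] at this
      simp [this, Pi.mulSingle_eq_of_ne (Ne.symm hji)]


lemma aux_card_hom {ι : Type*} [Fintype ι] [DecidableEq ι]
    (hs : IsSimpleGroup T) (hnonab : ¬ ∀ a b : T, a * b = b * a) :
    Nat.card ((∀ _ : ι, T) →* T) = 1 + Fintype.card ι * Nat.card (MulAut T) := by
  have hT : Nontrivial T := by
    push_neg at hnonab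
    obtain ⟨a₀, b₀, hab⟩ := hnonab
    exact ⟨a₀, 1, fun h => hab (h ▸ by simp)⟩
  obtain ⟨a₀, ha₀⟩ := exists_ne (1 : T)
  set Φ : Option (ι × MulAut T) → ((∀ _ : ι, T) →* T) :=
    fun o => o.elim 1 (fun p => p.2.toMonoidHom.comp (Pi.evalMonoidHom (fun _ => T) p.1)) with hΦ
  have hΦbij : Function.Bijective Φ := by
    constructor
    · rintro (_ | ⟨i, φ⟩) (_ | ⟨j, ψ⟩) h
      · rfl
      · exfalso
        have := congrFun (congrArg (DFunLike.coe) h) (Pi.mulSingle j a₀)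
        simp only [hΦ, Option.elim, MonoidHom.one_apply, MonoidHom.comp_apply,
          Pi.evalMonoidHom_apply, MulEquiv.coe_toMonoidHom, Pi.mulSingle_eq_same] at this
        exact ha₀ (ψ.injective (by simp [← this]))
      · exfalso
        have := congrFun (congrArg (DFunLike.coe) h) (Pi.mulSingle i a₀)
        simp only [hΦ, Option.elim, MonoidHom.one_apply, MonoidHom.comp_apply,
          Pi.evalMonoidHom_apply, MulEquiv.coe_toMonoidHom, Pi.mulSingle_eq_same] at this
        exact ha₀ (φ.injective (by simp [this]))
      · by_cases hij : i = j
        · subst hij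
          congr 1
          have hφψ : φ = ψ := by
            ext x
            have := congrFun (congrArg (DFunLike.coe) h) (Pi.mulSingle i x)
            simpa [hΦ] using this
          rw [hφψ]
        · exfalso
          have := congrFun (congrArg (DFunLike.coe) h) (Pi.mulSingle i a₀)
          simp only [hΦ, Option.elim, MonoidHom.comp_apply, Pi.evalMonoidHom_apply,
            MulEquiv.coe_toMonoidHom, Pi.mulSingle_eq_same,
            Pi.mulSingle_eq_of_ne (Ne.symm hij)] at this
          simp only [map_one] at this
          exact ha₀ (φ.injective (by simp [this]))
    · intro f
      rcases aux_hom_classify hs hnonab f with h | ⟨i, φ, h⟩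
      · exact ⟨none, h.symm⟩
      · exact ⟨some (i, φ), h.symm⟩
  rw [← Nat.card_eq_of_bijective Φ hΦbij, Finite.card_option, Nat.card_prod,
    Nat.card_eq_fintype_card (α := ι)]
  ring

end Aux

/-- The number of complements of the first factor of `T^n` is `1 + (n-1)·|Aut T|`. -/
theorem card_complements_of_first_factor (T : Type*) [Group T] [Finite T]
    (hsimple : IsSimpleGroup T) (hnonab : ¬ ∀ a b : T, a * b = b * a)
    (n : ℕ) [NeZero n] :
    Nat.card {K' : Subgroup (Fin n → T) //
        (Subgroup.pi ({0}ᶜ : Set (Fin n)) fun _ => (⊥ : Subgroup T)) ⊓ K' = ⊥ ∧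
        (Subgroup.pi ({0}ᶜ : Set (Fin n)) fun _ => (⊥ : Subgroup T)) ⊔ K' = ⊤} =
      1 + (n - 1) * Nat.card (MulAut T) := by
  classical
  set P : Set (Fin n) := {0}ᶜ with hP
  set H : Subgroup (Fin n → T) := Subgroup.pi P fun _ => (⊥ : Subgroup T) with hH
  have mem_H : ∀ x : Fin n → T, x ∈ H ↔ ∀ i : Fin n, i ≠ 0 → x i = 1 := by
    intro x
    rw [hH, Subgroup.mem_pi]
    constructor
    · intro h i hi
      simpa [Subgroup.mem_bot] using h i (Set.mem_compl_singleton_iff.mpr hi)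
    · intro h i hi
      simp [Subgroup.mem_bot, h i (Set.mem_compl_singleton_iff.mp hi)]
  -- the graph homomorphism
  let ext : ((∀ _ : P, T) →* T) → ((∀ _ : P, T) →* (Fin n → T)) := fun f =>
    MonoidHom.mk'
      (fun y i => if h : i = 0 then f y else y ⟨i, Set.mem_compl_singleton_iff.mpr h⟩)
      (by intro y z; funext i; by_cases h : i = 0 <;> simp [h])
  have ext_apply : ∀ f y (i : Fin n), ext f y i =
      if h : i = 0 then f y else y ⟨i, Set.mem_compl_singleton_iff.mpr h⟩ :=
    fun _ _ _ => rfl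
  -- complement properties of the graph
  have h1 : ∀ f, H ⊓ (ext f).range = ⊥ := by
    intro f
    rw [eq_bot_iff]
    intro x hx
    obtain ⟨hxH, hxK⟩ := Subgroup.mem_inf.mp hx
    obtain ⟨y, rfl⟩ := MonoidHom.mem_range.mp hxK
    have hy : y = 1 := by
      funext i
      have h := (mem_H _).mp hxH ↑i (Set.mem_compl_singleton_iff.mp i.2)
      rw [ext_apply, dif_neg (Set.mem_compl_singleton_iff.mp i.2)] at h
      simpa using h
    simp [hy, Subgroup.mem_bot]
  have h2 : ∀ f, H ⊔ (ext f).range = ⊤ := by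
    intro f
    rw [eq_top_iff]
    intro x _
    have hk : ext f (fun i => x ↑i) ∈ (ext f).range := ⟨_, rfl⟩
    have hh : x * (ext f (fun i => x ↑i))⁻¹ ∈ H := by
      refine (mem_H _).mpr (fun i hi => ?_)
      rw [Pi.mul_apply, Pi.inv_apply, ext_apply, dif_neg hi]
      simp
    have hmem := mul_mem ((le_sup_left : H ≤ H ⊔ (ext f).range) hh)
      ((le_sup_right : (ext f).range ≤ H ⊔ (ext f).range) hk)
    simpa using hmem
  let Ψ : ((∀ _ : P, T) →* T) →
      {K' : Subgroup (Fin n → T) // H ⊓ K' = ⊥ ∧ H ⊔ K' = ⊤} :=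
    fun f => ⟨(ext f).range, h1 f, h2 f⟩
  have hΨbij : Function.Bijective Ψ := by
    constructor
    · intro f g hfg
      have hr : (ext f).range = (ext g).range := congrArg Subtype.val hfg
      ext y
      have hy : ext f y ∈ (ext g).range := hr ▸ MonoidHom.mem_range.mpr ⟨y, rfl⟩
      obtain ⟨z, hz⟩ := MonoidHom.mem_range.mp hy
      have hzy : z = y := by
        funext i
        have h := congrFun hz (i : Fin n)
        rw [ext_apply, ext_apply, dif_neg (Set.mem_compl_singleton_iff.mp i.2),
          dif_neg (Set.mem_compl_singleton_iff.mp i.2)] at h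
        exact h
      have h0 := congrFun hz (0 : Fin n)
      rw [ext_apply, ext_apply, dif_pos rfl, dif_pos rfl, hzy] at h0
      exact h0.symm
    · rintro ⟨K, hK1, hK2⟩
      have hnormal : H.Normal := by
        constructor
        intro x hx g
        rw [mem_H] at hx ⊢
        intro i hi
        simp [hx i hi]
      have uniq : ∀ k ∈ K, ∀ k' ∈ K, (∀ i : P, k ↑i = k' ↑i) → k = k' := by
        intro k hk k' hk' hkk'
        have hm : k * k'⁻¹ ∈ H ⊓ K := by
          refine Subgroup.mem_inf.mpr ⟨(mem_H _).mpr (fun i hi => ?_),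
            mul_mem hk (inv_mem hk')⟩
          have h := hkk' ⟨i, Set.mem_compl_singleton_iff.mpr hi⟩
          simp only [Pi.mul_apply, Pi.inv_apply]
          rw [h]
          simp
        rw [hK1, Subgroup.mem_bot] at hm
        exact mul_inv_eq_one.mp hm
      have exist : ∀ y : (∀ _ : P, T), ∃ k, k ∈ K ∧ ∀ i : P, k ↑i = y i := by
        intro y
        set x : Fin n → T :=
          fun i => if h : i = 0 then 1 else y ⟨i, Set.mem_compl_singleton_iff.mpr h⟩ with hx
        have hxmem : x ∈ ((H ⊔ K : Subgroup (Fin n → T)) : Set (Fin n → T)) := by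
          rw [hK2]; trivial
        rw [Subgroup.normal_mul] at hxmem
        rw [Set.mem_mul] at hxmem
        obtain ⟨h, hh, k, hk, hhk⟩ := hxmem
        refine ⟨k, hk, fun i => ?_⟩
        have hk_eq : k = h⁻¹ * x := by rw [← hhk]; group
        have hh1 : h ↑i = 1 := (mem_H h).mp hh ↑i (Set.mem_compl_singleton_iff.mp i.2)
        rw [hk_eq, Pi.mul_apply, Pi.inv_apply, hh1, hx]
        simp [dif_neg (Set.mem_compl_singleton_iff.mp i.2)]
      choose kk hkK hky using exist
      set f : (∀ _ : P, T) →* T := MonoidHom.mk' (fun y => kk y 0) (by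
        intro y z
        have h : kk (y * z) = kk y * kk z := by
          refine uniq _ (hkK _) _ (mul_mem (hkK y) (hkK z)) (fun i => ?_)
          simp [hky]
        show kk (y * z) 0 = kk y 0 * kk z 0
        rw [h, Pi.mul_apply]) with hf
      refine ⟨f, Subtype.ext ?_⟩
      show (ext f).range = K
      apply le_antisymm
      · intro x hx
        obtain ⟨y, rfl⟩ := MonoidHom.mem_range.mp hx
        have h : ext f y = kk y := by
          funext i
          by_cases hi : i = 0
          · subst hi
            rw [ext_apply, dif_pos rfl]
            rfl
          · rw [ext_apply, dif_neg hi]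
            exact (hky y ⟨i, Set.mem_compl_singleton_iff.mpr hi⟩).symm
        rw [h]
        exact hkK y
      · intro k hk
        refine MonoidHom.mem_range.mpr ⟨fun i => k ↑i, ?_⟩
        have hkkk : kk (fun i => k ↑i) = k :=
          uniq _ (hkK _) _ hk (fun i => hky _ i)
        funext i
        by_cases hi : i = 0
        · subst hi
          rw [ext_apply, dif_pos rfl]
          show kk (fun i => k ↑i) 0 = k 0
          rw [hkkk]
        · rw [ext_apply, dif_neg hi]
  rw [← Nat.card_eq_of_bijective Ψ hΨbij, aux_card_hom hsimple hnonab]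
  congr 1
  congr 1
  have hcard : Fintype.card ↑P = n - 1 := by
    show Fintype.card ↑({0}ᶜ : Set (Fin n)) = n - 1
    rw [Fintype.card_compl_set]
    simp
  rw [hcard]
end
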